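/- Induction step lemma: Let f(n) denote the minimum number of empty triangles over all good drawings of K_n, n ≥ 5. If a good drawing D of K_n contains a lucky vertex v, i.e., a vertex with t(v) − l(v) ≥ 2, where t(v) is the number of empty triangles of D incident to v and l(v) is the number of triangles of D in which v is lonely, then the number of empty triangles of D is at least f(n−1) + 2. -/
import Mathlib


open Set Topology

/-- A good drawing of the complete graph `K_n` in the plane: vertices are distinct
points, each edge `uv` is a Jordan arc (continuous injective curve) from `u` to `v`,
edges avoid the other vertices, and any two distinct edges intersect in at most one
point (a proper crossing or a common endpoint). -/
structure GoodDrawing (n : ℕ) where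
  vtx : Fin n → ℝ × ℝ
  vtx_inj : Function.Injective vtx
  arc : Fin n → Fin n → ℝ → ℝ × ℝ
  arc_symm : ∀ u v t, arc u v t = arc v u (1 - t)
  arc_cont : ∀ u v, u ≠ v → ContinuousOn (arc u v) (Set.Icc 0 1)
  arc_injOn : ∀ u v, u ≠ v → Set.InjOn (arc u v) (Set.Icc 0 1)
  arc_src : ∀ u v, arc u v 0 = vtx u
  arc_avoid : ∀ u v w, u ≠ v → vtx w ∈ arc u v '' Set.Icc 0 1 → w = u ∨ w = v
  good : ∀ u v x y, u ≠ v → x ≠ y → ({u, v} : Set (Fin n)) ≠ {x, y} →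
    ((arc u v '' Set.Icc 0 1) ∩ (arc x y '' Set.Icc 0 1)).Subsingleton

namespace GoodDrawing

variable {n : ℕ}

/-- The set of points of the drawn edge `uv`. -/
def arcSet (D : GoodDrawing n) (u v : Fin n) : Set (ℝ × ℝ) := D.arc u v '' Set.Icc 0 1

/-- The Jordan curve (as a point set) formed by the triangle `uvw`. -/
def triSet (D : GoodDrawing n) (u v w : Fin n) : Set (ℝ × ℝ) :=
  D.arcSet u v ∪ D.arcSet v w ∪ D.arcSet w u

/-- Edges `uv` and `xy` cross: they share a point which is not a drawn vertex. -/
def Crosses (D : GoodDrawing n) (u v x y : Fin n) : Prop :=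
  ∃ p, p ∈ D.arcSet u v ∧ p ∈ D.arcSet x y ∧ p ∉ Set.range D.vtx

/-- Three pairwise distinct vertices. -/
def IsTri (u v w : Fin n) : Prop := u ≠ v ∧ v ≠ w ∧ u ≠ w

/-- The triangle `uvw` is empty: some connected component of the complement of its
Jordan curve contains none of the remaining vertices. -/
def EmptyTri (D : GoodDrawing n) (u v w : Fin n) : Prop :=
  IsTri u v w ∧ ∃ p ∉ D.triSet u v w,
    ∀ x : Fin n, x ∉ ({u, v, w} : Set (Fin n)) →
      D.vtx x ∉ connectedComponentIn (D.triSet u v w)ᶜ p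

/-- The triangle `uvw` is interior-empty: no remaining vertex lies in a bounded
component of the complement of its Jordan curve. -/
def InteriorEmptyTri (D : GoodDrawing n) (u v w : Fin n) : Prop :=
  IsTri u v w ∧ ∀ x : Fin n, x ∉ ({u, v, w} : Set (Fin n)) →
    ¬ Bornology.IsBounded (connectedComponentIn (D.triSet u v w)ᶜ (D.vtx x))

/-- `uvw` is a star triangle at `v`: its side `uw` is crossed by no edge incident
to `v`. -/
def StarTriAt (D : GoodDrawing n) (v u w : Fin n) : Prop :=
  IsTri u v w ∧ ∀ x : Fin n, x ≠ v → ¬ D.Crosses u w v x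

/-- `v` is lonely in the triangle `v₁v₂v₃`: `v` is the only vertex drawn in one of
the two connected components of the complement of the triangle. -/
def LonelyIn (D : GoodDrawing n) (v v₁ v₂ v₃ : Fin n) : Prop :=
  IsTri v₁ v₂ v₃ ∧ v ∉ ({v₁, v₂, v₃} : Set (Fin n)) ∧
    ∀ x : Fin n, x ∉ ({v, v₁, v₂, v₃} : Set (Fin n)) →
      D.vtx x ∉ connectedComponentIn (D.triSet v₁ v₂ v₃)ᶜ (D.vtx v)

/-- `v` is lonely in some triangle of the drawing. -/
def Lonely (D : GoodDrawing n) (v : Fin n) : Prop := ∃ a b c, D.LonelyIn v a b c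

/-- The number of empty triangles of the drawing (as unordered triples). -/
noncomputable def emptyTriCount (D : GoodDrawing n) : ℕ :=
  Set.ncard {s : Finset (Fin n) | ∃ u v w, s = {u, v, w} ∧ D.EmptyTri u v w}

/-- `t v`: the number of empty triangles incident to `v`. -/
noncomputable def t (D : GoodDrawing n) (v : Fin n) : ℕ :=
  Set.ncard {s : Finset (Fin n) | v ∈ s ∧ ∃ a b c, s = {a, b, c} ∧ D.EmptyTri a b c}

/-- `l v`: the number of triangles in which `v` is lonely. -/
noncomputable def l (D : GoodDrawing n) (v : Fin n) : ℕ :=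
  Set.ncard {s : Finset (Fin n) | ∃ a b c, s = {a, b, c} ∧ D.LonelyIn v a b c}

/-- `v` is lucky: `t v - l v ≥ 2`. -/
def Lucky (D : GoodDrawing n) (v : Fin n) : Prop := D.l v + 2 ≤ D.t v

/-- The number of empty star triangles at `v`. -/
noncomputable def starEmptyCountAt (D : GoodDrawing n) (v : Fin n) : ℕ :=
  Set.ncard {s : Finset (Fin n) |
    ∃ u w, s = {u, v, w} ∧ D.StarTriAt v u w ∧ D.EmptyTri u v w}

end GoodDrawing

/-- The minimum number of empty triangles over all good drawings of `K_m`. -/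
noncomputable def minEmpty (m : ℕ) : ℕ :=
  sInf {k | ∃ D : GoodDrawing m, D.emptyTriCount = k}

namespace GoodDrawing

/-- The drawing obtained by deleting the vertex `v`. -/
def restrict {m : ℕ} (D : GoodDrawing (m + 1)) (v : Fin (m + 1)) : GoodDrawing m where
  vtx i := D.vtx (v.succAbove i)
  vtx_inj := D.vtx_inj.comp Fin.succAbove_right_injective
  arc u w t := D.arc (v.succAbove u) (v.succAbove w) t
  arc_symm u w t := D.arc_symm _ _ t
  arc_cont u w h := D.arc_cont _ _ fun he => h (Fin.succAbove_right_injective he)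
  arc_injOn u w h := D.arc_injOn _ _ fun he => h (Fin.succAbove_right_injective he)
  arc_src u w := D.arc_src _ _
  arc_avoid u w x h hx := by
    rcases D.arc_avoid _ _ _ (fun he => h (Fin.succAbove_right_injective he)) hx with h1 | h1
    · exact Or.inl (Fin.succAbove_right_injective h1)
    · exact Or.inr (Fin.succAbove_right_injective h1)
  good u w x y huw hxy hne := by
    apply D.good _ _ _ _ (fun he => huw (Fin.succAbove_right_injective he))
      (fun he => hxy (Fin.succAbove_right_injective he))
    intro hset
    apply hne
    have himg : v.succAbove '' ({u, w} : Set (Fin m)) = v.succAbove '' ({x, y} : Set (Fin m)) := by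
      simpa [Set.image_pair] using hset
    exact (Set.image_injective.mpr Fin.succAbove_right_injective) himg

lemma emptyTri_restrict {m : ℕ} (D : GoodDrawing (m + 1)) (v : Fin (m + 1)) {a b c : Fin m}
    (h : (D.restrict v).EmptyTri a b c) :
    D.EmptyTri (v.succAbove a) (v.succAbove b) (v.succAbove c) ∨
      D.LonelyIn v (v.succAbove a) (v.succAbove b) (v.succAbove c) := by
  obtain ⟨⟨hab, hbc, hac⟩, p, hp, hall⟩ := h
  have einj : Function.Injective v.succAbove := Fin.succAbove_right_injective
  have htri : IsTri (v.succAbove a) (v.succAbove b) (v.succAbove c) :=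
    ⟨fun h => hab (einj h), fun h => hbc (einj h), fun h => hac (einj h)⟩
  have htset : D.triSet (v.succAbove a) (v.succAbove b) (v.succAbove c)
      = (D.restrict v).triSet a b c := rfl
  by_cases hv : D.vtx v ∈ connectedComponentIn ((D.restrict v).triSet a b c)ᶜ p
  · right
    refine ⟨htri, ?_, ?_⟩
    · simp only [Set.mem_insert_iff, Set.mem_singleton_iff]
      push_neg
      exact ⟨(Fin.succAbove_ne v a).symm, (Fin.succAbove_ne v b).symm,
        (Fin.succAbove_ne v c).symm⟩
    · intro x hx
      simp only [Set.mem_insert_iff, Set.mem_singleton_iff] at hx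
      push_neg at hx
      obtain ⟨hxv, hxa, hxb, hxc⟩ := hx
      obtain ⟨j, hj⟩ := Fin.exists_succAbove_eq hxv
      have hja : j ≠ a := fun hh => hxa (by rw [← hj, hh])
      have hjb : j ≠ b := fun hh => hxb (by rw [← hj, hh])
      have hjc : j ≠ c := fun hh => hxc (by rw [← hj, hh])
      have := hall j (by simp [hja, hjb, hjc])
      rw [htset, ← connectedComponentIn_eq hv]
      rw [← hj]
      exact this
  · left
    refine ⟨htri, p, by rw [htset]; exact hp, ?_⟩
    intro x hx
    simp only [Set.mem_insert_iff, Set.mem_singleton_iff] at hx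
    push_neg at hx
    obtain ⟨hxa, hxb, hxc⟩ := hx
    by_cases hxv : x = v
    · rw [htset, hxv]; exact hv
    · obtain ⟨j, hj⟩ := Fin.exists_succAbove_eq hxv
      have hja : j ≠ a := fun hh => hxa (by rw [← hj, hh])
      have hjb : j ≠ b := fun hh => hxb (by rw [← hj, hh])
      have hjc : j ≠ c := fun hh => hxc (by rw [← hj, hh])
      have := hall j (by simp [hja, hjb, hjc])
      rw [htset, ← hj]
      exact this

end GoodDrawing

/-- If a good drawing of `K_n`, `n ≥ 5`, contains a lucky vertex `v`
(i.e. `t v - l v ≥ 2`), then the number of its empty triangles is at least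
`f(n-1) + 2`, where `f(m)` is the minimum number of empty triangles over good
drawings of `K_m`. -/
theorem induction_step_lucky {n : ℕ} (hn : 5 ≤ n) (D : GoodDrawing n) (v : Fin n)
    (hlucky : D.Lucky v) : minEmpty (n - 1) + 2 ≤ D.emptyTriCount := by
  obtain ⟨m, rfl⟩ : ∃ m, n = m + 1 := ⟨n - 1, by omega⟩
  have hm : m + 1 - 1 = m := rfl
  rw [hm]
  set D' := D.restrict v with hD'
  set e : Fin m ↪ Fin (m + 1) := ⟨v.succAbove, Fin.succAbove_right_injective⟩ with he
  set E' : Set (Finset (Fin m)) :=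
    {s | ∃ a b c, s = {a, b, c} ∧ D'.EmptyTri a b c} with hE'
  set E : Set (Finset (Fin (m + 1))) :=
    {s | ∃ a b c, s = {a, b, c} ∧ D.EmptyTri a b c} with hE
  set Ev : Set (Finset (Fin (m + 1))) :=
    {s | v ∈ s ∧ ∃ a b c, s = {a, b, c} ∧ D.EmptyTri a b c} with hEv
  set Env : Set (Finset (Fin (m + 1))) :=
    {s | v ∉ s ∧ ∃ a b c, s = {a, b, c} ∧ D.EmptyTri a b c} with hEnv
  set L : Set (Finset (Fin (m + 1))) :=
    {s | ∃ a b c, s = {a, b, c} ∧ D.LonelyIn v a b c} with hL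
  -- split E
  have hEsplit : E = Ev ∪ Env := by
    ext s
    simp only [hE, hEv, hEnv, Set.mem_setOf_eq, Set.mem_union]
    constructor
    · intro hs
      by_cases hvs : v ∈ s
      · exact Or.inl ⟨hvs, hs⟩
      · exact Or.inr ⟨hvs, hs⟩
    · rintro (⟨_, hs⟩ | ⟨_, hs⟩) <;> exact hs
  have hdisj : Disjoint Ev Env := by
    rw [Set.disjoint_left]
    rintro s ⟨hvs, -⟩ ⟨hvs', -⟩
    exact hvs' hvs
  have hcount : D.emptyTriCount = D.t v + Set.ncard Env := by
    have : D.emptyTriCount = Set.ncard E := rfl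
    rw [this, hEsplit, Set.ncard_union_eq hdisj (Set.toFinite _) (Set.toFinite _)]
    rfl
  -- image of E' under map e
  have himgsub : (fun s => Finset.map e s) '' E' ⊆ Env ∪ L := by
    rintro s ⟨s', ⟨a, b, c, rfl, hemp⟩, rfl⟩
    have hmap : Finset.map e ({a, b, c} : Finset (Fin m)) = {e a, e b, e c} := by
      simp [Finset.map_insert]
    have hvnotmem : v ∉ ({e a, e b, e c} : Finset (Fin (m + 1))) := by
      simp only [Finset.mem_insert, Finset.mem_singleton]
      push_neg
      exact ⟨(Fin.succAbove_ne v a).symm, (Fin.succAbove_ne v b).symm,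
        (Fin.succAbove_ne v c).symm⟩
    have hgoal : ({e a, e b, e c} : Finset (Fin (m + 1))) ∈ Env ∪ L := by
      rcases D.emptyTri_restrict v hemp with hE1 | hL1
      · exact Or.inl ⟨hvnotmem, e a, e b, e c, rfl, hE1⟩
      · exact Or.inr ⟨e a, e b, e c, rfl, hL1⟩
    simpa [hmap] using hgoal
  have hE'card : Set.ncard E' ≤ Set.ncard Env + Set.ncard L := by
    calc Set.ncard E' = Set.ncard ((fun s => Finset.map e s) '' E') :=
          (Set.ncard_image_of_injective _ (Finset.map_injective e)).symm
      _ ≤ Set.ncard (Env ∪ L) := Set.ncard_le_ncard himgsub (Set.toFinite _)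
      _ ≤ Set.ncard Env + Set.ncard L := Set.ncard_union_le _ _
  have hmin : minEmpty m ≤ D'.emptyTriCount := Nat.sInf_le ⟨D', rfl⟩
  have hDE' : D'.emptyTriCount = Set.ncard E' := rfl
  have hlv : D.l v = Set.ncard L := rfl
  have hlucky' : D.l v + 2 ≤ D.t v := hlucky
  omega
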